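/- Let p be a positive odd integer and r an even integer with 2 ≤ r < p. Then Σ_{i=1}^{(p−1)/2} ⌊((r+1)p − 2ri)/(2p)⌋ = Σ_{k=1}^{r/2} ⌊(2k−1)p/(2r)⌋; here the summand on the left equals ⌊(r+1)/2 − ri/p⌋. -/

import Mathlib

private lemma floorq (a b : ℤ) (hb : 0 < b) : ⌊(a:ℚ)/(b:ℚ)⌋ = a / b := by
  rw [← Int.toNat_of_nonneg hb.le]
  push_cast
  exact Rat.floor_intCast_div_natCast a b.toNat

/-- Floor-sum identity used in the proof of Proposition 2.3:
the sum over `1 ≤ i ≤ (p-1)/2` of `⌊(r+1)/2 - ri/p⌋ = ⌊((r+1)p - 2ri)/(2p)⌋` equals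
the sum over `1 ≤ k ≤ r/2` of `⌊(2k-1)p/(2r)⌋`. -/
theorem floor_sum_first (p r : ℤ) (hp : 0 < p) (hodd : Odd p) (hre : Even r)
    (hr2 : 2 ≤ r) (hrp : r < p) :
    (∑ i ∈ Finset.Icc (1 : ℤ) ((p - 1) / 2),
        ⌊(((r + 1) * p - 2 * r * i : ℤ) : ℚ) / ((2 * p : ℤ) : ℚ)⌋) =
      ∑ k ∈ Finset.Icc (1 : ℤ) (r / 2),
        ⌊(((2 * k - 1) * p : ℤ) : ℚ) / ((2 * r : ℤ) : ℚ)⌋ := by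
  obtain ⟨m, hm⟩ := hodd
  obtain ⟨s, hs⟩ := hre
  have hp2 : (0:ℤ) < 2 * p := by linarith
  have hr2' : (0:ℤ) < 2 * r := by linarith
  have hM : (p - 1) / 2 = m := by omega
  have hS : r / 2 = s := by omega
  rw [hM, hS]
  -- replace floors by integer division
  have L : ∀ i ∈ Finset.Icc (1:ℤ) m,
      ⌊(((r + 1) * p - 2 * r * i : ℤ) : ℚ) / ((2 * p : ℤ) : ℚ)⌋
        = ((r + 1) * p - 2 * r * i) / (2 * p) := fun i _ => floorq _ _ hp2
  have R : ∀ k ∈ Finset.Icc (1:ℤ) s,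
      ⌊(((2 * k - 1) * p : ℤ) : ℚ) / ((2 * r : ℤ) : ℚ)⌋
        = ((2 * k - 1) * p) / (2 * r) := fun k _ => floorq _ _ hr2'
  rw [Finset.sum_congr rfl L, Finset.sum_congr rfl R]
  -- LHS: each term counts j's
  have Lcount : ∀ i ∈ Finset.Icc (1:ℤ) m,
      ((r + 1) * p - 2 * r * i) / (2 * p)
        = ∑ j ∈ Finset.Icc (1:ℤ) s,
            (if 2 * r * i + 2 * p * j ≤ (r + 1) * p then (1:ℤ) else 0) := by
    intro i hi
    rw [Finset.mem_Icc] at hi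
    set q : ℤ := ((r + 1) * p - 2 * r * i) / (2 * p) with hq
    have hnum : 0 ≤ (r + 1) * p - 2 * r * i := by nlinarith [hi.1, hi.2]
    have hq0 : 0 ≤ q := Int.ediv_nonneg hnum hp2.le
    have hqs : q ≤ s := by
      by_contra h
      push_neg at h
      have h2 : s + 1 ≤ q := by omega
      have := (Int.le_ediv_iff_mul_le hp2).mp h2
      nlinarith [hi.1]
    have key : ∀ j : ℤ, (2 * r * i + 2 * p * j ≤ (r + 1) * p ↔ j ≤ q) := by
      intro j
      rw [hq, Int.le_ediv_iff_mul_le hp2]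
      constructor <;> intro h <;> nlinarith [h]
    rw [Finset.sum_boole]
    have hfil : Finset.filter (fun j => 2 * r * i + 2 * p * j ≤ (r + 1) * p)
        (Finset.Icc (1:ℤ) s) = Finset.Icc (1:ℤ) q := by
      ext j
      simp only [Finset.mem_filter, Finset.mem_Icc, key j]
      omega
    rw [hfil, Int.card_Icc]
    omega
  -- RHS: reflect k ↦ s + 1 - k, then each term counts i's
  have Rcount : ∀ j ∈ Finset.Icc (1:ℤ) s,
      ((2 * (s + 1 - j) - 1) * p) / (2 * r)
        = ∑ i ∈ Finset.Icc (1:ℤ) m,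
            (if 2 * r * i + 2 * p * j ≤ (r + 1) * p then (1:ℤ) else 0) := by
    intro j hj
    rw [Finset.mem_Icc] at hj
    have h1 : 2 * (s + 1 - j) - 1 = r + 1 - 2 * j := by omega
    rw [h1]
    set q : ℤ := ((r + 1 - 2 * j) * p) / (2 * r) with hq
    have hnum : 0 ≤ (r + 1 - 2 * j) * p := by nlinarith [hj.2]
    have hq0 : 0 ≤ q := Int.ediv_nonneg hnum hr2'.le
    have hqm : q ≤ m := by
      by_contra h
      push_neg at h
      have h2 : m + 1 ≤ q := by omega
      have := (Int.le_ediv_iff_mul_le hr2').mp h2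
      nlinarith [hj.1, hj.2]
    have key : ∀ i : ℤ, (2 * r * i + 2 * p * j ≤ (r + 1) * p ↔ i ≤ q) := by
      intro i
      rw [hq, Int.le_ediv_iff_mul_le hr2']
      constructor <;> intro h <;> nlinarith [h]
    rw [Finset.sum_boole]
    have hfil : Finset.filter (fun i => 2 * r * i + 2 * p * j ≤ (r + 1) * p)
        (Finset.Icc (1:ℤ) m) = Finset.Icc (1:ℤ) q := by
      ext i
      simp only [Finset.mem_filter, Finset.mem_Icc, key i]
      omega
    rw [hfil, Int.card_Icc]
    omega
  have reflect : (∑ k ∈ Finset.Icc (1:ℤ) s, ((2 * k - 1) * p) / (2 * r))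
      = ∑ j ∈ Finset.Icc (1:ℤ) s, ((2 * (s + 1 - j) - 1) * p) / (2 * r) := by
    apply Finset.sum_nbij' (fun k => s + 1 - k) (fun k => s + 1 - k)
    · intro a ha; rw [Finset.mem_Icc] at *; omega
    · intro a ha; rw [Finset.mem_Icc] at *; omega
    · intro a _; omega
    · intro a _; omega
    · intro a _; congr 2; omega
  rw [Finset.sum_congr rfl Lcount, reflect, Finset.sum_congr rfl Rcount]
  exact Finset.sum_comm
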